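/- arXiv:2211.13822 — 2 statements merged into one kernel-verified Lean document; each statement's English description precedes it below -/
import Mathlib

section
/- Let K be a number field, γ an algebraic number with monic irreducible polynomial f_{K,γ}(x) = b_n x^n + ⋯ + b_0 over K, and for each nonzero prime 𝔭 of O_K set α_𝔭 = −min{v_𝔭(b_i) : 0 ≤ i ≤ n}. Let I_{K,γ} = ∏_𝔭 𝔭^{α_𝔭}, an ideal of O_K. Then the kernel of the surjective O_K-algebra homomorphism O_K[x] → O_K[γ] sending x to γ equals f_{K,γ}(x)·I_{K,γ}[x], i.e. O_K[γ] ≅ O_K[x]/(f_{K,γ}(x) I_{K,γ}[x]); here f_{K,γ}(x) I_{K,γ}[x] = {f_{K,γ}(x)·h(x) : h ∈ K[x] with all coefficients in I_{K,γ}} is contained in O_K[x]. -/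
open IntermediateField NumberField IsDedekindDomain

noncomputable section

local notation "Qbar" => AlgebraicClosure ℚ

instance numberField_of_fd (K : IntermediateField ℚ Qbar) [FiniteDimensional ℚ K] :
    NumberField K := ⟨⟩

/-- `K(γ)` as an intermediate field of `Qbar/ℚ`. -/
def adjF (K : IntermediateField ℚ Qbar) (γ : Qbar) : IntermediateField ℚ Qbar :=
  K ⊔ IntermediateField.adjoin ℚ {γ}

instance adjF_fd (K : IntermediateField ℚ Qbar) (γ : Qbar) [FiniteDimensional ℚ K] :
    FiniteDimensional ℚ (adjF K γ) := by
  have h1 : FiniteDimensional ℚ (IntermediateField.adjoin ℚ ({γ} : Set Qbar)) := by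
    apply IntermediateField.finiteDimensional_adjoin
    intro x _
    exact (IsAlgebraic.isIntegral ((AlgebraicClosure.isAlgebraic ℚ).isAlgebraic x))
  exact IntermediateField.finiteDimensional_sup K _

theorem mem_adjF (K : IntermediateField ℚ Qbar) (γ : Qbar) : γ ∈ adjF K γ :=
  le_sup_right (a := K) (IntermediateField.subset_adjoin ℚ {γ} rfl)

/-- γ as an element of K(γ). -/
def adjElt (K : IntermediateField ℚ Qbar) (γ : Qbar) : adjF K γ := ⟨γ, mem_adjF K γ⟩

/-- the set X(K,γ) -/
def XSet (K : IntermediateField ℚ Qbar) [FiniteDimensional ℚ K] (γ : Qbar) :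
    Set (HeightOneSpectrum (𝓞 K)) :=
  {p | ∀ q : HeightOneSpectrum (𝓞 (adjF K γ)),
    q.asIdeal.comap (RingOfIntegers.mapRingHom (IntermediateField.inclusion (le_sup_left : K ≤ adjF K γ)).toRingHom)
      = p.asIdeal → 1 < q.valuation (adjF K γ) (adjElt K γ)}

/-- the set Y(K,γ) -/
def YSet (K : IntermediateField ℚ Qbar) [FiniteDimensional ℚ K] (γ : Qbar) :
    Set (HeightOneSpectrum (𝓞 K)) :=
  {p | ∃ q : HeightOneSpectrum (𝓞 (adjF K γ)),
    q.asIdeal.comap (RingOfIntegers.mapRingHom (IntermediateField.inclusion (le_sup_left : K ≤ adjF K γ)).toRingHom)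
      = p.asIdeal ∧ 1 < q.valuation (adjF K γ) (adjElt K γ)}

/-- the image of `𝓞 K` in `Qbar`. -/
def OKset (K : IntermediateField ℚ Qbar) : Set Qbar :=
  Set.range (fun a : 𝓞 K => algebraMap K Qbar (algebraMap (𝓞 K) K a))

/-- the subring `O_K[γ]` of `Qbar`. -/
def OKadj (K : IntermediateField ℚ Qbar) (γ : Qbar) : Subring Qbar :=
  Subring.closure (OKset K ∪ {γ})


/-- The ideal `I_{K,γ}`, described by its elements inside `K`:
`x ∈ I_{K,γ}` iff `v_𝔭(x) ≥ α_𝔭 = -min_i v_𝔭(b_i)` for all `𝔭`, i.e. iff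
`v_𝔭(b_i) * v_𝔭(x) ≤ 1` (multiplicatively) for all `𝔭` and all coefficients `b_i`
of the monic irreducible polynomial of `γ` over `K`. -/
def ISet (K : IntermediateField ℚ Qbar) [FiniteDimensional ℚ K] (γ : Qbar) : Set K :=
  {x | ∀ 𝔭 : HeightOneSpectrum (𝓞 K), ∀ i ≤ (minpoly K γ).natDegree,
    𝔭.valuation K ((minpoly K γ).coeff i) * 𝔭.valuation K x ≤ 1}

/-- the evaluation homomorphism `O_K[x] → Qbar` sending `x` to `γ`, whose image
is `O_K[γ]`. -/
def evalHom (K : IntermediateField ℚ Qbar) (γ : Qbar) : Polynomial (𝓞 K) →+* Qbar :=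
  Polynomial.eval₂RingHom ((algebraMap K Qbar).comp (algebraMap (𝓞 K) K)) γ


open Polynomial in
private lemma exists_argmax {Γ₀ : Type*} [LinearOrderedCommGroupWithZero Γ₀]
    {K : Type*} [Field K] (v : Valuation K Γ₀) (p : K[X]) :
    ∃ n, (∀ m, v (p.coeff m) ≤ v (p.coeff n)) ∧ ∀ m < n, v (p.coeff m) < v (p.coeff n) := by
  classical
  have hmax : ∃ n, ∀ m, v (p.coeff m) ≤ v (p.coeff n) := by
    obtain ⟨n, hn, hm⟩ := Finset.exists_max_image (Finset.range (p.natDegree + 1))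
      (fun m => v (p.coeff m)) ⟨0, Finset.mem_range.mpr (Nat.succ_pos _)⟩
    refine ⟨n, fun m => ?_⟩
    by_cases hmem : m ∈ Finset.range (p.natDegree + 1)
    · exact hm m hmem
    · have : p.coeff m = 0 := p.coeff_eq_zero_of_natDegree_lt
        (by simpa using Nat.lt_of_succ_le (not_lt.mp (fun h => hmem (Finset.mem_range.mpr h))))
      simp [this]
  refine ⟨Nat.find hmax, Nat.find_spec hmax, fun m hm => ?_⟩
  have := Nat.find_min hmax hm
  push_neg at this
  obtain ⟨m', hm'⟩ := this
  exact lt_of_lt_of_le hm' (Nat.find_spec hmax m')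

open Polynomial in
private lemma gauss_aux {Γ₀ : Type*} [LinearOrderedCommGroupWithZero Γ₀]
    {K : Type*} [Field K] (v : Valuation K Γ₀) (p q : K[X])
    (hpq : ∀ k, v ((p * q).coeff k) ≤ 1) (i j : ℕ) :
    v (p.coeff i) * v (q.coeff j) ≤ 1 := by
  by_contra hc
  push_neg at hc
  obtain ⟨a, ha1, ha2⟩ := exists_argmax v p
  obtain ⟨b, hb1, hb2⟩ := exists_argmax v q
  set A := v (p.coeff a) with hA
  set B := v (q.coeff b) with hB
  have hAB : 1 < A * B := lt_of_lt_of_le hc (mul_le_mul' (ha1 i) (hb1 j))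
  have hAB0 : A * B ≠ 0 := (lt_of_le_of_lt zero_le' hAB).ne'
  have hA0 : A ≠ 0 := left_ne_zero_of_mul hAB0
  have hB0 : B ≠ 0 := right_ne_zero_of_mul hAB0
  have hcoeff : v ((p * q).coeff (a + b)) = A * B := by
    rw [Polynomial.coeff_mul]
    have hmem : ((a, b) : ℕ × ℕ) ∈ Finset.HasAntidiagonal.antidiagonal (a + b) := by simp
    rw [← Finset.add_sum_erase _ _ hmem]
    have hrest : v (∑ x ∈ (Finset.HasAntidiagonal.antidiagonal (a + b)).erase (a, b),
        p.coeff x.1 * q.coeff x.2) < A * B := by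
      apply Valuation.map_sum_lt _ hAB0
      intro x hx
      rw [Finset.mem_erase, Finset.HasAntidiagonal.mem_antidiagonal] at hx
      rw [v.map_mul]
      rcases lt_trichotomy x.1 a with h | h | h
      · have := mul_lt_mul_of_le_of_lt_of_nonneg_of_pos (hb1 x.2) (ha2 _ h) zero_le' (zero_lt_iff.mpr hB0)
        rw [mul_comm] at this
        rw [mul_comm A B]
        exact this
      · exact absurd (Prod.ext h (by omega)) hx.1
      · have hx2 : x.2 < b := by omega
        exact mul_lt_mul_of_le_of_lt_of_nonneg_of_pos (ha1 x.1) (hb2 _ hx2) zero_le' (zero_lt_iff.mpr hA0)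
    have hvmain : v (p.coeff a * q.coeff b) = A * B := v.map_mul _ _
    rw [v.map_add_eq_of_lt_left (by rw [hvmain]; exact hrest), hvmain]
  exact absurd (hcoeff ▸ hpq (a + b)) (not_le.mpr hAB)

theorem stmt7 (K : IntermediateField ℚ Qbar) [FiniteDimensional ℚ K] (γ : Qbar) :
    Set.range (evalHom K γ) = (OKadj K γ : Set Qbar) ∧
    {g : Polynomial (𝓞 K) | evalHom K γ g = 0} =
      {g : Polynomial (𝓞 K) | ∃ h : Polynomial K, (∀ j, h.coeff j ∈ ISet K γ) ∧
        g.map (algebraMap (𝓞 K) K) = minpoly K γ * h} := by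
  classical
  have hint : IsIntegral K γ :=
    IsIntegral.tower_top (((AlgebraicClosure.isAlgebraic ℚ).isAlgebraic γ).isIntegral)
  have he : ∀ g : Polynomial (𝓞 K), evalHom K γ g =
      Polynomial.eval₂ (algebraMap K Qbar) γ (g.map (algebraMap (𝓞 K) K)) := by
    intro g
    rw [Polynomial.eval₂_map]
    rfl
  constructor
  · apply Set.Subset.antisymm
    · rintro _ ⟨g, rfl⟩
      show (evalHom K γ) g ∈ OKadj K γ
      induction g using Polynomial.induction_on with
      | C a =>
        have : evalHom K γ (Polynomial.C a) =
            algebraMap K Qbar (algebraMap (𝓞 K) K a) := Polynomial.eval₂_C _ _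
        rw [this]
        exact Subring.subset_closure (Or.inl ⟨a, rfl⟩)
      | add p q hp hq =>
        rw [map_add]; exact add_mem hp hq
      | monomial n a _ =>
        have : evalHom K γ (Polynomial.C a * Polynomial.X ^ (n + 1)) =
            algebraMap K Qbar (algebraMap (𝓞 K) K a) * γ ^ (n + 1) := by
          simp [evalHom]
        rw [this]
        have h1 : algebraMap K Qbar (algebraMap (𝓞 K) K a) ∈ OKadj K γ :=
          Subring.subset_closure (Or.inl ⟨a, rfl⟩)
        have h2 : γ ∈ OKadj K γ := Subring.subset_closure (Or.inr rfl)
        exact mul_mem h1 (pow_mem h2 (n + 1))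
    · intro x hx
      rw [← RingHom.coe_range]
      refine Subring.closure_le.mpr ?_ hx
      rintro y (⟨a, rfl⟩ | hy)
      · exact ⟨Polynomial.C a, Polynomial.eval₂_C _ _⟩
      · rw [Set.mem_singleton_iff] at hy
        subst hy
        exact ⟨Polynomial.X, Polynomial.eval₂_X _ _⟩
  · ext g
    simp only [Set.mem_setOf_eq]
    constructor
    · intro hg
      have haev : Polynomial.aeval γ (g.map (algebraMap (𝓞 K) K)) = 0 := by
        rw [Polynomial.aeval_def, ← he g]; exact hg
      obtain ⟨h, hh⟩ := minpoly.dvd K γ haev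
      refine ⟨h, ?_, hh⟩
      intro j 𝔭 i _
      apply gauss_aux (𝔭.valuation K) (minpoly K γ) h
      intro k
      rw [← hh, Polynomial.coeff_map]
      exact 𝔭.valuation_le_one (g.coeff k)
    · rintro ⟨h, -, hh⟩
      show evalHom K γ g = 0
      rw [he g, hh, ← Polynomial.aeval_def, map_mul, minpoly.aeval, zero_mul]
end
end

section
/- Let γ be an algebraic number and S a generating set of γ. Then Z̄[γ] = Z̄[1/α : α ∈ S], i.e. the subring of Q̄ generated by the algebraic integers together with γ equals the subring generated by the algebraic integers together with the inverses of the elements of S. -/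
open IntermediateField NumberField IsDedekindDomain

noncomputable section

local notation "Qbar" => AlgebraicClosure ℚ

theorem fd_of_le {K₁ K : IntermediateField ℚ Qbar} (h : K₁ ≤ K) [FiniteDimensional ℚ K] :
    FiniteDimensional ℚ K₁ :=
  FiniteDimensional.of_injective (IntermediateField.inclusion h).toLinearMap
    (IntermediateField.inclusion h).toRingHom.injective

/-- the set `ℒ(γ, K)` of primes in `X(K,γ)` that do not come from any proper subfield. -/
def LSet (γ : Qbar) (K : IntermediateField ℚ Qbar) [FiniteDimensional ℚ K] :
    Set (HeightOneSpectrum (𝓞 K)) :=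
  {q | q ∈ XSet K γ ∧ ∀ (K₁ : IntermediateField ℚ Qbar) (h : K₁ < K),
    haveI := fd_of_le h.le
    ¬ ∃ p ∈ XSet K₁ γ,
      q.asIdeal.comap (RingOfIntegers.mapRingHom (IntermediateField.inclusion h.le)) = p.asIdeal}

/-- the collection `ℒ(γ)` of number fields `K` with `ℒ(γ, K) ≠ ∅`. -/
def LFields (γ : Qbar) : Set (IntermediateField ℚ Qbar) :=
  {K | ∃ h : FiniteDimensional ℚ K, (@LSet γ K h).Nonempty}

/-- membership `α ∈ 𝔮` for `α : Qbar` and `𝔮` a prime of `𝓞 L`. -/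
def memPrime (L : IntermediateField ℚ Qbar) [FiniteDimensional ℚ L]
    (q : HeightOneSpectrum (𝓞 L)) (α : Qbar) : Prop :=
  ∃ a : 𝓞 L, a ∈ q.asIdeal ∧ algebraMap L Qbar (algebraMap (𝓞 L) L a) = α

/-- `S` is a generating set of `γ`. -/
def IsGenSet (γ : Qbar) (S : Set Qbar) : Prop :=
  ∀ (L : IntermediateField ℚ Qbar) [FiniteDimensional ℚ L],
    XSet L γ = {q : HeightOneSpectrum (𝓞 L) | ∃ α ∈ S, memPrime L q α}

section Aux16

/-- embedding of `𝓞 L` into `Qbar`. -/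
def emb (L : IntermediateField ℚ Qbar) : 𝓞 L →+* Qbar :=
  ((algebraMap L Qbar : L →+* Qbar).comp (algebraMap (𝓞 L) L))

lemma emb_injective (L : IntermediateField ℚ Qbar) : Function.Injective (emb L) :=
  (algebraMap L Qbar).injective.comp RingOfIntegers.coe_injective

lemma emb_integral (L : IntermediateField ℚ Qbar) (x : 𝓞 L) : IsIntegral ℤ (emb L x) := by
  have h : IsIntegral ℤ x := RingOfIntegers.isIntegral x
  exact h.map (emb L).toIntAlgHom

/-- being integral at a prime `p` of `𝓞 L`. -/
def IntAt (L : IntermediateField ℚ Qbar) [FiniteDimensional ℚ L]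
    (p : HeightOneSpectrum (𝓞 L)) (x : Qbar) : Prop :=
  ∃ a b : 𝓞 L, b ∉ p.asIdeal ∧ emb L a = x * emb L b

lemma exists_rep (L : IntermediateField ℚ Qbar) [FiniteDimensional ℚ L]
    (p : HeightOneSpectrum (𝓞 L)) (y : L) (hy : p.valuation L y ≤ 1) :
    ∃ a b : 𝓞 L, b ∉ p.asIdeal ∧
      algebraMap (𝓞 L) L a = y * algebraMap (𝓞 L) L b := by
  obtain ⟨c, d, hd, rfl⟩ := IsFractionRing.div_surjective (A := 𝓞 L) y
  have hd0 : d ≠ 0 := nonZeroDivisors.ne_zero hd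
  have hdL : algebraMap (𝓞 L) L d ≠ 0 :=
    fun h => hd0 ((map_eq_zero_iff _ (IsFractionRing.injective (𝓞 L) L)).mp h)
  have hdv0 : p.intValuationDef d ≠ 0 := p.intValuation_ne_zero d hd0
  have hdv1 : p.intValuationDef d ≤ 1 := p.intValuation_le_one d
  obtain ⟨m, hm⟩ := WithZero.ne_zero_iff_exists.mp hdv0
  have hmle : m ≤ 1 := by
    rw [← hm] at hdv1
    exact_mod_cast hdv1
  set k : ℕ := (-Multiplicative.toAdd m).toNat with hk
  have hmk : m = Multiplicative.ofAdd (-(k : ℤ)) := by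
    have h0 : Multiplicative.toAdd m ≤ 0 := hmle
    rw [hk, show (-(((-Multiplicative.toAdd m).toNat : ℕ) : ℤ)) = Multiplicative.toAdd m by
      omega]
    simp
  have hdvk : p.intValuationDef d = Multiplicative.ofAdd (-(k : ℤ)) := by
    rw [← hm, hmk]
  have hk1 : p.asIdeal ^ k ∣ Ideal.span {d} :=
    (p.intValuation_le_pow_iff_dvd d k).mp (le_of_eq hdvk)
  have hk2 : ¬ p.asIdeal ^ (k + 1) ∣ Ideal.span {d} := by
    intro hcon
    have h1 := (p.intValuation_le_pow_iff_dvd d (k + 1)).mpr hcon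
    rw [HeightOneSpectrum.intValuation_apply, hdvk, WithZero.exp_eq_coe_ofAdd] at h1
    have h2 : -((k : ℤ)) ≤ -((k : ℤ) + 1) := by exact_mod_cast h1
    omega
  have hcv : p.intValuationDef c ≤ Multiplicative.ofAdd (-(k : ℤ)) := by
    have h1 : p.valuation L (algebraMap (𝓞 L) L c) = p.intValuationDef c :=
      p.valuation_of_algebraMap c
    have h2 : p.valuation L (algebraMap (𝓞 L) L d) = p.intValuationDef d :=
      p.valuation_of_algebraMap d
    have h3 : p.valuation L (algebraMap (𝓞 L) L c) =
        p.valuation L (algebraMap (𝓞 L) L c / algebraMap (𝓞 L) L d) *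
          p.valuation L (algebraMap (𝓞 L) L d) := by
      rw [← Valuation.map_mul, div_mul_cancel₀ _ hdL]
    calc p.intValuationDef c = _ := h1.symm
      _ ≤ 1 * p.valuation L (algebraMap (𝓞 L) L d) := by
          rw [h3]; exact mul_le_mul_left hy _
      _ = p.intValuationDef d := by rw [one_mul, h2]
      _ = _ := hdvk
  have hck : p.asIdeal ^ k ∣ Ideal.span {c} :=
    (p.intValuation_le_pow_iff_dvd c k).mp hcv
  obtain ⟨B, hB⟩ := hk1
  have hpB : ¬ p.asIdeal ∣ B := by
    intro ⟨C, hC⟩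
    exact hk2 ⟨C, by rw [hB, hC]; ring⟩
  have hBp : ¬ B ≤ p.asIdeal := fun h => hpB (Ideal.dvd_iff_le.mpr h)
  obtain ⟨b, hbB, hbp⟩ := Set.not_subset.mp hBp
  have h1 : Ideal.span {d} ∣ Ideal.span {c} * Ideal.span {b} := by
    rw [hB]; exact mul_dvd_mul hck (Ideal.dvd_span_singleton.mpr hbB)
  rw [Ideal.span_singleton_mul_span_singleton] at h1
  have h2 : c * b ∈ Ideal.span {d} :=
    Ideal.le_of_dvd h1 (Ideal.mem_span_singleton_self _)
  obtain ⟨a, ha⟩ := Ideal.mem_span_singleton.mp h2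
  refine ⟨a, b, hbp, ?_⟩
  have haL := congrArg (algebraMap (𝓞 L) L) ha
  rw [map_mul, map_mul] at haL
  rw [div_mul_eq_mul_div, eq_div_iff hdL]
  linear_combination -haL

end Aux16
section Aux16b

lemma algebraMap_adjElt (L : IntermediateField ℚ Qbar) (γ : Qbar) :
    algebraMap (adjF L γ) Qbar (adjElt L γ) = γ := rfl

lemma valuation_le_one_iff (L : IntermediateField ℚ Qbar) [FiniteDimensional ℚ L]
    (p : HeightOneSpectrum (𝓞 L)) (y : L) :
    p.valuation L y ≤ 1 ↔ IntAt L p (algebraMap L Qbar y) := by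
  constructor
  · intro h
    obtain ⟨a, b, hb, hab⟩ := exists_rep L p y h
    refine ⟨a, b, hb, ?_⟩
    have := congrArg (algebraMap L Qbar) hab
    rwa [map_mul] at this
  · rintro ⟨a, b, hb, hab⟩
    have habL : algebraMap (𝓞 L) L a = y * algebraMap (𝓞 L) L b := by
      apply (algebraMap L Qbar).injective
      rw [map_mul]
      exact hab
    have hb0 : b ≠ 0 := fun h => hb (h ▸ p.asIdeal.zero_mem)
    have hbv : p.intValuationDef b = 1 := by
      rcases lt_or_eq_of_le (p.intValuation_le_one b) with h | h
      · exact absurd (Ideal.le_of_dvd ((p.intValuation_lt_one_iff_dvd b).mp h)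
          (Ideal.mem_span_singleton_self b)) hb
      · exact h
    have hval := congrArg (p.valuation L) habL
    rw [Valuation.map_mul, p.valuation_of_algebraMap, p.valuation_of_algebraMap,
      HeightOneSpectrum.intValuation_apply, HeightOneSpectrum.intValuation_apply, hbv,
      mul_one] at hval
    rw [← hval]
    exact p.intValuation_le_one a

variable (L : IntermediateField ℚ Qbar) [FiniteDimensional ℚ L] (γ : Qbar)

/-- the canonical map `𝓞 L →+* 𝓞 (L(γ))`. -/
def incMap : 𝓞 L →+* 𝓞 (adjF L γ) :=
  RingOfIntegers.mapRingHom (IntermediateField.inclusion (le_sup_left : L ≤ adjF L γ)).toRingHom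

lemma emb_incMap (x : 𝓞 L) : emb (adjF L γ) (incMap L γ x) = emb L x := rfl

lemma incMap_injective : Function.Injective (incMap L γ) := fun x y h => by
  apply emb_injective L
  rw [← emb_incMap L γ, ← emb_incMap L γ, h]

lemma incMap_surjective (hγ : γ ∈ L) : Function.Surjective (incMap L γ) := by
  intro w
  have hF : adjF L γ = L := by
    rw [adjF, sup_eq_left]
    exact IntermediateField.adjoin_le_iff.mpr (Set.singleton_subset_iff.mpr hγ)
  have hmem : ((w : adjF L γ) : Qbar) ∈ L :=
    (SetLike.ext_iff.mp hF _).mp (w : adjF L γ).2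
  have hint : IsIntegral ℤ (⟨((w : adjF L γ) : Qbar), hmem⟩ : L) :=
    (isIntegral_algebraMap_iff (algebraMap (↥L) Qbar).injective).mp (emb_integral _ w)
  refine ⟨⟨⟨((w : adjF L γ) : Qbar), hmem⟩, hint⟩, ?_⟩
  apply emb_injective
  rfl

end Aux16b
section Aux16c

variable (L : IntermediateField ℚ Qbar) [FiniteDimensional ℚ L] (γ : Qbar)

lemma intAt_transport (q : HeightOneSpectrum (𝓞 (adjF L γ)))
    (p : HeightOneSpectrum (𝓞 L))
    (hpq : q.asIdeal.comap (incMap L γ) = p.asIdeal) (hγ : γ ∈ L) (x : Qbar) :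
    IntAt (adjF L γ) q x ↔ IntAt L p x := by
  constructor
  · rintro ⟨a, b, hb, hab⟩
    obtain ⟨a', ha'⟩ := incMap_surjective L γ hγ a
    obtain ⟨b', hb'⟩ := incMap_surjective L γ hγ b
    refine ⟨a', b', ?_, ?_⟩
    · intro h
      rw [← hpq] at h
      exact hb (by rwa [Ideal.mem_comap, hb'] at h)
    · rw [← emb_incMap L γ, ← emb_incMap L γ, ha', hb']
      exact hab
  · rintro ⟨a', b', hb', hab⟩
    refine ⟨incMap L γ a', incMap L γ b', ?_, ?_⟩
    · intro h
      exact hb' (by rw [← hpq]; exact Ideal.mem_comap.mpr h)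
    · rw [emb_incMap, emb_incMap]; exact hab

lemma exists_lift_prime (hγ : γ ∈ L) (p : HeightOneSpectrum (𝓞 L)) :
    ∃ q : HeightOneSpectrum (𝓞 (adjF L γ)),
      q.asIdeal.comap (incMap L γ) = p.asIdeal := by
  have hbij : Function.Bijective (incMap L γ) :=
    ⟨incMap_injective L γ, incMap_surjective L γ hγ⟩
  let e : 𝓞 L ≃+* 𝓞 (adjF L γ) := RingEquiv.ofBijective _ hbij
  have hmc : p.asIdeal.map (e : 𝓞 L →+* 𝓞 (adjF L γ)) = p.asIdeal.comap (e.symm) :=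
    Ideal.map_comap_of_equiv e
  have hprime : (p.asIdeal.map (e : 𝓞 L →+* 𝓞 (adjF L γ))).IsPrime := by
    rw [hmc]
    exact Ideal.IsPrime.comap _
  have hbot : p.asIdeal.map (e : 𝓞 L →+* 𝓞 (adjF L γ)) ≠ ⊥ := by
    intro hb
    have hcm : (p.asIdeal.map (e : 𝓞 L →+* 𝓞 (adjF L γ))).comap (incMap L γ) = p.asIdeal :=
      Ideal.comap_map_of_bijective _ hbij
    rw [hb] at hcm
    apply p.ne_bot
    rw [← hcm]
    refine (eq_bot_iff).mpr fun x hx => ?_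
    have hx0 : incMap L γ x = 0 := hx
    exact Ideal.mem_bot.mpr (hbij.1 (by rw [hx0, map_zero]))
  refine ⟨⟨p.asIdeal.map (e : 𝓞 L →+* 𝓞 (adjF L γ)), hprime, hbot⟩, ?_⟩
  exact Ideal.comap_map_of_bijective _ hbij

lemma mem_XSet_iff (hγ : γ ∈ L) (p : HeightOneSpectrum (𝓞 L)) :
    p ∈ XSet L γ ↔ ¬ IntAt L p γ := by
  have hval : ∀ q : HeightOneSpectrum (𝓞 (adjF L γ)),
      (1 < q.valuation (adjF L γ) (adjElt L γ) ↔ ¬ IntAt (adjF L γ) q γ) := by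
    intro q
    rw [← not_le, valuation_le_one_iff (adjF L γ) q (adjElt L γ), algebraMap_adjElt]
  constructor
  · intro h hInt
    obtain ⟨q, hq⟩ := exists_lift_prime L γ hγ p
    have h1 := h q hq
    rw [hval q] at h1
    exact h1 ((intAt_transport L γ q p hq hγ γ).mpr hInt)
  · intro h q hq
    rw [hval q]
    intro hInt
    exact h ((intAt_transport L γ q p hq hγ γ).mp hInt)

end Aux16c
section Aux16d

lemma minpoly_int_coeff_zero_ne_zero {L : IntermediateField ℚ Qbar} (d : 𝓞 L) (hd : d ≠ 0) :
    (minpoly ℤ d).coeff 0 ≠ 0 := by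
  intro h0
  haveI : NoZeroSMulDivisors ℤ (𝓞 L) := inferInstance
  have hint : IsIntegral ℤ d := RingOfIntegers.isIntegral d
  have hXdiv : Polynomial.X * (minpoly ℤ d).divX = minpoly ℤ d := by
    have h := Polynomial.X_mul_divX_add (minpoly ℤ d)
    rwa [h0, Polynomial.C_0, add_zero] at h
  have haev : (Polynomial.aeval d) ((minpoly ℤ d).divX) = 0 := by
    have h := minpoly.aeval ℤ d
    rw [← hXdiv, map_mul, Polynomial.aeval_X] at h
    rcases mul_eq_zero.mp h with h | h
    · exact absurd h hd
    · exact h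
  have hdvd := minpoly.isIntegrallyClosed_dvd hint haev
  have hne : (minpoly ℤ d).divX ≠ 0 := by
    intro h
    rw [h, mul_zero] at hXdiv
    exact (minpoly.ne_zero hint) hXdiv.symm
  have hdeg := Polynomial.natDegree_le_of_dvd hdvd hne
  have h1 : 0 < (minpoly ℤ d).natDegree := minpoly.natDegree_pos hint
  rw [Polynomial.natDegree_divX_eq_natDegree_tsub_one] at hdeg
  omega

lemma dvd_coeff_zero {L : IntermediateField ℚ Qbar} (d : 𝓞 L) :
    d ∣ (((minpoly ℤ d).coeff 0 : ℤ) : 𝓞 L) := by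
  have h := minpoly.aeval ℤ d
  rw [← Polynomial.X_mul_divX_add (minpoly ℤ d), map_add, map_mul, Polynomial.aeval_X,
    Polynomial.aeval_C] at h
  refine ⟨-(Polynomial.aeval d ((minpoly ℤ d).divX)), ?_⟩
  have h' : d * (Polynomial.aeval d ((minpoly ℤ d).divX)) +
      (((minpoly ℤ d).coeff 0 : ℤ) : 𝓞 L) = 0 := h
  linear_combination h'

set_option maxHeartbeats 1000000 in
set_option synthInstance.maxHeartbeats 400000 in
lemma exists_intAt (L : IntermediateField ℚ Qbar) [FiniteDimensional ℚ L] (x : Qbar)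
    (hx : ∃ y : L, algebraMap L Qbar y = x) :
    ∃ p : HeightOneSpectrum (𝓞 L), IntAt L p x := by
  obtain ⟨y, rfl⟩ := hx
  obtain ⟨c, d, hd, rfl⟩ := IsFractionRing.div_surjective (A := 𝓞 L) y
  have hd0 : d ≠ 0 := nonZeroDivisors.ne_zero hd
  set m := (minpoly ℤ d).coeff 0 with hm
  have hm0 : m ≠ 0 := minpoly_int_coeff_zero_ne_zero d hd0
  obtain ⟨ℓ, hℓge, hℓp⟩ := Nat.exists_infinite_primes (m.natAbs + 1)
  have hℓQ : ((ℓ : ℕ) : Qbar) ≠ 0 := Nat.cast_ne_zero.mpr hℓp.ne_zero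
  have hnotunit : ¬ IsUnit ((ℓ : ℕ) : 𝓞 L) := by
    intro h
    obtain ⟨v, hv⟩ := h.exists_right_inv
    have hQ : ((ℓ : ℕ) : Qbar) * emb L v = 1 := by
      have := congrArg (emb L) hv
      rwa [map_mul, map_natCast, map_one] at this
    have hint : IsIntegral ℤ (emb L v) := emb_integral L v
    have hvq : emb L v = algebraMap ℚ Qbar (((ℓ : ℕ) : ℚ)⁻¹) := by
      rw [map_inv₀, map_natCast]
      exact (inv_eq_of_mul_eq_one_right hQ).symm
    rw [hvq, isIntegral_algebraMap_iff (algebraMap ℚ Qbar).injective] at hint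
    obtain ⟨z, hz⟩ := IsIntegrallyClosed.isIntegral_iff.mp hint
    have hℓQ' : ((ℓ : ℕ) : ℚ) ≠ 0 := Nat.cast_ne_zero.mpr hℓp.ne_zero
    have hzℓ : (z : ℚ) * (ℓ : ℚ) = 1 := by
      rw [show ((z : ℤ) : ℚ) = algebraMap ℤ ℚ z from rfl, hz]
      exact inv_mul_cancel₀ hℓQ'
    have hzℓ' : z * (ℓ : ℤ) = 1 := by exact_mod_cast hzℓ
    have : ((ℓ : ℕ) : ℤ) = 1 ∨ ((ℓ : ℕ) : ℤ) = -1 :=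
      Int.isUnit_iff.mp (IsUnit.of_mul_eq_one z (by linarith [hzℓ']))
    have h2 := hℓp.two_le
    rcases this with h | h <;> omega
  have hne : Ideal.span {((ℓ : ℕ) : 𝓞 L)} ≠ ⊤ :=
    fun h => hnotunit (Ideal.span_singleton_eq_top.mp h)
  obtain ⟨M, hMmax, hMle⟩ := Ideal.exists_le_maximal _ hne
  have hℓM : ((ℓ : ℕ) : 𝓞 L) ∈ M := hMle (Ideal.subset_span rfl)
  have hMbot : M ≠ ⊥ := by
    intro h
    rw [h] at hℓM
    have h0 : ((ℓ : ℕ) : 𝓞 L) = 0 := hℓM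
    exact hℓQ (by rw [← map_natCast (emb L), h0, map_zero])
  refine ⟨⟨M, hMmax.isPrime, hMbot⟩, c, d, ?_, ?_⟩
  · intro hdM
    have hmM : ((m : ℤ) : 𝓞 L) ∈ M := by
      obtain ⟨w, hw⟩ := dvd_coeff_zero d
      rw [← hm] at hw
      rw [hw]
      exact M.mul_mem_right _ hdM
    have hcop : IsCoprime ((ℓ : ℕ) : ℤ) m := by
      rw [Int.isCoprime_iff_gcd_eq_one]
      have : ¬ (ℓ ∣ m.natAbs) := by
        intro hdvd
        have := Nat.le_of_dvd (Int.natAbs_pos.mpr hm0) hdvd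
        omega
      have := (Nat.Prime.coprime_iff_not_dvd hℓp).mpr this
      simpa [Int.gcd] using this
    obtain ⟨u, v, huv⟩ := hcop
    have h1M : (1 : 𝓞 L) ∈ M := by
      have hcast := congrArg (algebraMap ℤ (𝓞 L)) huv
      rw [map_add, map_mul, map_mul, map_one, map_natCast, eq_intCast, eq_intCast] at hcast
      rw [← hcast]
      exact M.add_mem (M.mul_mem_left _ hℓM) (M.mul_mem_left _ hmM)
    exact hMmax.ne_top (M.eq_top_of_isUnit_mem h1M isUnit_one)
  · have hdQ : emb L d ≠ 0 :=
      fun h => hd0 (emb_injective L (by rw [h, map_zero]))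
    rw [map_div₀]
    rw [show algebraMap (↥L) Qbar (algebraMap (𝓞 ↥L) ↥L c) = emb L c from rfl,
      show algebraMap (↥L) Qbar (algebraMap (𝓞 ↥L) ↥L d) = emb L d from rfl]
    field_simp

lemma zero_not_mem (γ : Qbar) (S : Set Qbar) (hgen : IsGenSet γ S) : 0 ∉ S := by
  intro h0
  haveI : FiniteDimensional ℚ (adjF ⊥ γ) := adjF_fd ⊥ γ
  obtain ⟨p, hp⟩ := exists_intAt (adjF ⊥ γ) γ ⟨adjElt ⊥ γ, rfl⟩
  have hX : p ∈ XSet (adjF ⊥ γ) γ := by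
    rw [hgen (adjF ⊥ γ)]
    exact ⟨0, h0, 0, p.asIdeal.zero_mem, by simp⟩
  exact (mem_XSet_iff (adjF ⊥ γ) γ (mem_adjF ⊥ γ) p).mp hX hp

end Aux16d
section Aux16e

set_option maxHeartbeats 1000000 in
set_option synthInstance.maxHeartbeats 400000 in
lemma no_prime_with_gamma (γ : Qbar) (L : IntermediateField ℚ Qbar)
    [FiniteDimensional ℚ L] (hγL : γ ∈ L)
    (T : Subring Qbar) (hγT : γ ∈ T)
    (f : 𝓞 L →+* T) (hf : ∀ x, (f x : Qbar) = emb L x)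
    (M : Ideal T) [M.IsPrime]
    (p : HeightOneSpectrum (𝓞 L)) (hp : p.asIdeal = M.comap f)
    (hnI : ¬ IntAt L p γ) : False := by
  have hval : ¬ p.valuation L (⟨γ, hγL⟩ : L) ≤ 1 := by
    intro hle
    exact hnI ((valuation_le_one_iff L p ⟨γ, hγL⟩).mp hle)
  rw [not_le] at hval
  have hγL0 : (⟨γ, hγL⟩ : L) ≠ 0 := by
    intro h
    rw [h, Valuation.map_zero] at hval
    exact absurd hval (by simp)
  have hγ0 : γ ≠ 0 := fun h => hγL0 (Subtype.ext h)
  have hvne : p.valuation L (⟨γ, hγL⟩ : L) ≠ 0 := (Valuation.ne_zero_iff _).mpr hγL0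
  obtain ⟨e, he⟩ := WithZero.ne_zero_iff_exists.mp hvne
  have hepos : 0 < Multiplicative.toAdd e := by
    rw [← he] at hval
    have h1 : (1 : Multiplicative ℤ) < e := by exact_mod_cast hval
    exact h1
  set n : ℕ := (Multiplicative.toAdd e).toNat with hn
  have hn1 : 1 ≤ n := by omega
  obtain ⟨π, hπ⟩ := p.intValuation_exists_uniformizer
  have hπ0 : π ≠ 0 := by
    intro h
    rw [h] at hπ
    simp [IsDedekindDomain.HeightOneSpectrum.intValuationDef_zero] at hπ
    exact WithZero.coe_ne_zero hπ.symm
  have hπp : π ∈ p.asIdeal := by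
    have hlt : p.intValuationDef π < 1 := by
      rw [← HeightOneSpectrum.intValuation_apply, hπ, WithZero.exp_eq_coe_ofAdd]
      exact_mod_cast Multiplicative.ofAdd_lt.mpr (by norm_num : (-1 : ℤ) < 0)
    exact Ideal.le_of_dvd ((p.intValuation_lt_one_iff_dvd π).mp hlt)
      (Ideal.mem_span_singleton_self π)
  set πL := algebraMap (𝓞 L) L π with hπLdef
  have hπL0 : πL ≠ 0 :=
    fun h => hπ0 ((map_eq_zero_iff _ RingOfIntegers.coe_injective).mp h)
  have hvt : p.valuation L (((⟨γ, hγL⟩ : L) * πL ^ n)⁻¹) ≤ 1 := by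
    have hcalc : (↑e : WithZero (Multiplicative ℤ)) *
        (↑(Multiplicative.ofAdd (-1 : ℤ)) : WithZero (Multiplicative ℤ)) ^ n = 1 := by
      rw [← WithZero.coe_pow, ← WithZero.coe_mul]
      have h1 : e * Multiplicative.ofAdd (-1 : ℤ) ^ n = 1 := by
        have h2 : Multiplicative.toAdd (e * Multiplicative.ofAdd (-1 : ℤ) ^ n) = 0 := by
          simp only [toAdd_mul, toAdd_pow, toAdd_ofAdd, nsmul_eq_mul]
          omega
        rw [← ofAdd_toAdd (e * Multiplicative.ofAdd (-1 : ℤ) ^ n), h2, ofAdd_zero]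
      rw [h1, WithZero.coe_one]
    rw [map_inv₀, Valuation.map_mul, Valuation.map_pow, hπLdef, p.valuation_of_algebraMap,
      hπ, WithZero.exp_eq_coe_ofAdd, ← he, hcalc, inv_one]
  obtain ⟨a, b, hb, hab⟩ := (valuation_le_one_iff L p _).mp hvt
  have hπQ0 : emb L π ≠ 0 :=
    fun h => hπ0 (emb_injective L (by rw [h, map_zero]))
  have hab' : emb L a = (γ * (emb L π) ^ n)⁻¹ * emb L b := by
    rw [map_inv₀, map_mul, map_pow] at hab
    exact hab
  have hQ : emb L b = emb L a * γ * (emb L π) ^ n := by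
    have hx0 : γ * (emb L π) ^ n ≠ 0 := mul_ne_zero hγ0 (pow_ne_zero _ hπQ0)
    rw [hab']
    field_simp
  have hπM : f π ∈ M := Ideal.mem_comap.mp (hp ▸ hπp)
  have hfb : f b ∈ M := by
    have hfeq : f b = f a * (⟨γ, hγT⟩ : T) * (f π) ^ n := by
      apply Subtype.ext
      push_cast [hf]
      exact hQ
    rw [hfeq]
    obtain ⟨k, hk⟩ : ∃ k, n = k + 1 := ⟨n - 1, by omega⟩
    rw [hk, pow_succ, ← mul_assoc]
    exact M.mul_mem_left _ hπM
  exact hb (by rw [hp]; exact Ideal.mem_comap.mpr hfb)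

end Aux16e
set_option maxHeartbeats 1000000 in
set_option synthInstance.maxHeartbeats 400000 in
theorem stmt16 (γ : Qbar) (S : Set Qbar) (hS : ∀ α ∈ S, IsIntegral ℤ α)
    (hgen : IsGenSet γ S) :
    Subring.closure ((integralClosure ℤ Qbar : Set Qbar) ∪ {γ}) =
      Subring.closure ((integralClosure ℤ Qbar : Set Qbar) ∪ ((fun α => α⁻¹) '' S)) := by
  have h0S : 0 ∉ S := zero_not_mem γ S hgen
  have hdir2 : ∀ α ∈ S, α⁻¹ ∈ Subring.closure ((integralClosure ℤ Qbar : Set Qbar) ∪ {γ}) := by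
    intro α hα
    set R := Subring.closure ((integralClosure ℤ Qbar : Set Qbar) ∪ {γ}) with hRdef
    have hα0 : α ≠ 0 := fun h => h0S (h ▸ hα)
    have hαR : α ∈ R := Subring.subset_closure (Or.inl (hS α hα))
    have hγR : γ ∈ R := Subring.subset_closure (Or.inr rfl)
    haveI : FiniteDimensional ℚ (adjF ⊥ α) := adjF_fd ⊥ α
    set L := adjF (adjF ⊥ α) γ with hLdef
    haveI : FiniteDimensional ℚ L := adjF_fd (adjF ⊥ α) γ
    have hγL : γ ∈ L := mem_adjF (adjF ⊥ α) γ
    have hαL : α ∈ L := (le_sup_left : adjF ⊥ α ≤ L) (mem_adjF ⊥ α)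
    have hfmem : ∀ x : 𝓞 L, emb L x ∈ R := fun x =>
      Subring.subset_closure (Or.inl (emb_integral L x))
    set f : 𝓞 L →+* R := (emb L).codRestrict R hfmem with hfdef
    have hf : ∀ x, (f x : Qbar) = emb L x := fun x => rfl
    have hαint : IsIntegral ℤ (⟨α, hαL⟩ : L) :=
      (isIntegral_algebraMap_iff (algebraMap (↥L) Qbar).injective).mp (hS α hα)
    set aα : 𝓞 L := ⟨⟨α, hαL⟩, hαint⟩ with haαdef
    have hunit : IsUnit (⟨α, hαR⟩ : R) := by
      by_contra hnu
      obtain ⟨M, hMmax, hMle⟩ := Ideal.exists_le_maximal _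
        (fun h => hnu (Ideal.span_singleton_eq_top.mp h))
      have hαM : (⟨α, hαR⟩ : R) ∈ M := hMle (Ideal.subset_span rfl)
      haveI : M.IsPrime := hMmax.isPrime
      have hfaα : f aα ∈ M := by
        have hfeq : f aα = ⟨α, hαR⟩ := Subtype.ext rfl
        rw [hfeq]; exact hαM
      have hpne : (M.comap f : Ideal (𝓞 L)) ≠ ⊥ := by
        intro h
        have hmem : aα ∈ M.comap f := Ideal.mem_comap.mpr hfaα
        rw [h] at hmem
        have h0 : aα = 0 := hmem
        exact hα0 ((congrArg (fun z : 𝓞 L => (emb L z)) h0).trans (map_zero _))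
      set p : HeightOneSpectrum (𝓞 L) := ⟨M.comap f, Ideal.IsPrime.comap f, hpne⟩ with hpdef
      have hpX : p ∈ XSet L γ := by
        rw [hgen L]
        exact ⟨α, hα, aα, Ideal.mem_comap.mpr hfaα, rfl⟩
      exact no_prime_with_gamma γ L hγL R hγR f hf M p rfl
        ((mem_XSet_iff L γ hγL p).mp hpX)
    obtain ⟨u, hu⟩ := hunit
    have hmul : ((u⁻¹ : Rˣ) : R) * (⟨α, hαR⟩ : R) = 1 := by
      rw [← hu]; exact u.inv_mul
    have hQ : (((u⁻¹ : Rˣ) : R) : Qbar) * α = 1 := by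
      have := congrArg (fun z : R => (z : Qbar)) hmul
      push_cast at this
      exact this
    have hinv : (((u⁻¹ : Rˣ) : R) : Qbar) = α⁻¹ := eq_inv_of_mul_eq_one_left hQ
    rw [← hinv]
    exact ((u⁻¹ : Rˣ) : R).2
  have hdir1 : γ ∈ Subring.closure
      ((integralClosure ℤ Qbar : Set Qbar) ∪ ((fun α => α⁻¹) '' S)) := by
    set R' := Subring.closure ((integralClosure ℤ Qbar : Set Qbar) ∪ ((fun α => α⁻¹) '' S))
      with hR'def
    haveI : FiniteDimensional ℚ (adjF ⊥ γ) := adjF_fd ⊥ γ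
    set L := adjF ⊥ γ with hLdef
    have hγL : γ ∈ L := mem_adjF ⊥ γ
    have hfmem : ∀ x : 𝓞 L, emb L x ∈ R' := fun x =>
      Subring.subset_closure (Or.inl (emb_integral L x))
    set f : 𝓞 L →+* R' := (emb L).codRestrict R' hfmem with hfdef
    have hf : ∀ x, (f x : Qbar) = emb L x := fun x => rfl
    set J : Ideal R' :=
      { carrier := {x : R' | (x : Qbar) * γ ∈ R'}
        add_mem' := fun {x y} hx hy => by
          simp only [Set.mem_setOf_eq] at *
          push_cast
          rw [add_mul]
          exact add_mem hx hy
        zero_mem' := by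
          simp only [Set.mem_setOf_eq]
          push_cast
          rw [zero_mul]
          exact zero_mem R'
        smul_mem' := fun r x hx => by
          simp only [Set.mem_setOf_eq, smul_eq_mul] at *
          push_cast
          rw [mul_assoc]
          exact mul_mem r.2 hx } with hJdef
    by_cases h1J : J = ⊤
    · have h1 : (1 : R') ∈ J := by rw [h1J]; exact Submodule.mem_top
      have h2 : ((1 : R') : Qbar) * γ ∈ R' := h1
      rwa [OneMemClass.coe_one, one_mul] at h2
    · obtain ⟨M, hMmax, hMle⟩ := Ideal.exists_le_maximal _ h1J
      haveI : M.IsPrime := hMmax.isPrime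
      exfalso
      obtain ⟨c, d, hdnz, hcd⟩ := IsFractionRing.div_surjective (A := 𝓞 L) (⟨γ, hγL⟩ : L)
      have hd0 : d ≠ 0 := nonZeroDivisors.ne_zero hdnz
      have hdQ0 : emb L d ≠ 0 := fun h => hd0 (emb_injective L (by rw [h, map_zero]))
      have hγeq : emb L c / emb L d = γ := by
        have := congrArg (algebraMap L Qbar) hcd
        rwa [map_div₀] at this
      have hdJ : f d ∈ J := by
        show ((f d : R') : Qbar) * γ ∈ R'
        rw [hf, ← hγeq, mul_comm, div_mul_cancel₀ _ hdQ0]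
        exact hfmem c
      have hpne : (M.comap f : Ideal (𝓞 L)) ≠ ⊥ := by
        intro h
        have hmem : d ∈ M.comap f := Ideal.mem_comap.mpr (hMle hdJ)
        rw [h] at hmem
        exact hd0 hmem
      set p : HeightOneSpectrum (𝓞 L) := ⟨M.comap f, Ideal.IsPrime.comap f, hpne⟩ with hpdef
      by_cases hInt : IntAt L p γ
      · obtain ⟨a, b, hb, hab⟩ := hInt
        have hfbJ : f b ∈ J := by
          show ((f b : R') : Qbar) * γ ∈ R'
          rw [hf]
          have hba : emb L b * γ = emb L a := by rw [hab]; ring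
          rw [hba]
          exact hfmem a
        exact hb (Ideal.mem_comap.mpr (hMle hfbJ))
      · have hpX : p ∈ XSet L γ := (mem_XSet_iff L γ hγL p).mpr hInt
        rw [hgen L] at hpX
        obtain ⟨α, hαS, aw, hawmem, hawα⟩ := hpX
        have hα0 : α ≠ 0 := fun h => h0S (h ▸ hαS)
        have hαinv : α⁻¹ ∈ R' := Subring.subset_closure (Or.inr ⟨α, hαS, rfl⟩)
        have hfα : f aw ∈ M := Ideal.mem_comap.mp hawmem
        have h1M : (1 : R') ∈ M := by
          have hprod : f aw * (⟨α⁻¹, hαinv⟩ : R') = 1 := by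
            apply Subtype.ext
            push_cast [hf]
            rw [show emb L aw = α from hawα]
            exact mul_inv_cancel₀ hα0
          rw [← hprod]
          exact M.mul_mem_right _ hfα
        exact hMmax.ne_top (M.eq_top_of_isUnit_mem h1M isUnit_one)
  apply le_antisymm
  · apply Subring.closure_le.mpr
    rintro x (hx | rfl)
    · exact Subring.subset_closure (Or.inl hx)
    · exact hdir1
  · apply Subring.closure_le.mpr
    rintro x (hx | ⟨α, hαS, rfl⟩)
    · exact Subring.subset_closure (Or.inl hx)
    · exact hdir2 α hαS
end
end
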